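/- Let φ : ℝ → ℝ be twice continuously differentiable on [a,b] with a < b, and let m₂ ≤ φ''(t) ≤ M₂ on [a,b]. Then |(φ(a)+φ(b))/6 + (2/3)φ((a+b)/2) - (1/(b-a))∫_a^b φ(t) dt| ≤ (1/162)(M₂ - m₂)(b-a)². -/

import Mathlib

/-! Integrating by parts twice against the Peano kernel writes Simpson's error as `∫ κ φ''`,
where `κ` is piecewise quadratic with mean zero on each half of `[a, b]`. Hence `φ''` may be
replaced by `φ'' - (m₂ + M₂) / 2`, which is bounded by `(M₂ - m₂) / 2`, and the estimate follows
from `∫ |κ| = (b - a) ^ 3 / 81`. -/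

open Set intervalIntegral MeasureTheory
open scoped Interval

theorem intervalIntegral.integral_mul_deriv_deriv_eq {a b : ℝ} {u u' u'' v v' v'' : ℝ → ℝ}
    (hu : ∀ x ∈ [[a, b]], HasDerivWithinAt u (u' x) [[a, b]] x)
    (hu' : ∀ x ∈ [[a, b]], HasDerivWithinAt u' (u'' x) [[a, b]] x)
    (hv : ∀ x ∈ [[a, b]], HasDerivWithinAt v (v' x) [[a, b]] x)
    (hv' : ∀ x ∈ [[a, b]], HasDerivWithinAt v' (v'' x) [[a, b]] x)
    (hu'' : IntervalIntegrable u'' volume a b) (hv'' : IntervalIntegrable v'' volume a b) :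
    ∫ x in a..b, u x * v'' x =
      u b * v' b - u a * v' a - (u' b * v b - u' a * v a) + ∫ x in a..b, u'' x * v x := by
  have hu'_int : IntervalIntegrable u' volume a b :=
    ContinuousOn.intervalIntegrable fun x hx ↦ (hu' x hx).continuousWithinAt
  have hv'_int : IntervalIntegrable v' volume a b :=
    ContinuousOn.intervalIntegrable fun x hx ↦ (hv' x hx).continuousWithinAt
  rw [integral_mul_deriv_eq_deriv_mul_of_hasDerivWithinAt hu hv' hu'_int hv'',
    integral_mul_deriv_eq_deriv_mul_of_hasDerivWithinAt hu' hv hu'' hv'_int]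
  ring

theorem intervalIntegral.abs_integral_mul_le_of_abs_le {a b K : ℝ} {f g : ℝ → ℝ}
    (hf : IntervalIntegrable f volume a b) (hg : ∀ x ∈ [[a, b]], |g x| ≤ K) :
    |∫ x in a..b, f x * g x| ≤ K * |(∫ x in a..b, |f x|)| := by
  have hK : 0 ≤ K := (abs_nonneg _).trans (hg a left_mem_uIcc)
  have hfg : ∀ x ∈ Ι a b, ‖f x * g x‖ ≤ |f x| * K := fun x hx ↦ by
    rw [Real.norm_eq_abs, abs_mul]
    exact mul_le_mul_of_nonneg_left (hg x (uIoc_subset_uIcc hx)) (abs_nonneg _)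
  have := norm_integral_le_abs_of_norm_le ((ae_restrict_iff' measurableSet_uIoc).mpr
    (ae_of_all _ hfg)) (hf.abs.mul_const K)
  rwa [Real.norm_eq_abs, integral_mul_const, abs_mul, abs_of_nonneg hK, mul_comm] at this

/-- The Peano kernel of Simpson's rule for `[a, b]` on the half `[[a, (a + b) / 2]]`; on the other
half it is `simpsonKernel b a`. -/
noncomputable def simpsonKernel (a b t : ℝ) : ℝ := (t - a) * (2 * a + b - 3 * t) / 6

section SimpsonKernel

variable {a b : ℝ}

theorem continuous_simpsonKernel : Continuous (simpsonKernel a b) := by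
  unfold simpsonKernel; fun_prop

theorem hasDerivAt_simpsonKernel (t : ℝ) :
    HasDerivAt (simpsonKernel a b) ((b - a) / 6 - (t - a)) t :=
  ((((hasDerivAt_id' t).sub_const a).fun_mul
    (((hasDerivAt_id' t).const_mul 3).const_sub (2 * a + b))).div_const 6).congr_deriv (by ring)

theorem integral_simpsonKernel_eq (p q : ℝ) :
    ∫ t in p..q, simpsonKernel a b t =
      ((b - a) * (q - a) ^ 2 / 12 - (q - a) ^ 3 / 6) -
        ((b - a) * (p - a) ^ 2 / 12 - (p - a) ^ 3 / 6) :=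
  integral_eq_sub_of_hasDerivAt (f := fun t ↦ (b - a) * (t - a) ^ 2 / 12 - (t - a) ^ 3 / 6)
    (fun t _ ↦ ((((((hasDerivAt_id' t).sub_const a).fun_pow 2).const_mul (b - a)).div_const
      12).fun_sub ((((hasDerivAt_id' t).sub_const a).fun_pow 3).div_const 6)).congr_deriv
      (by simp only [simpsonKernel]; push_cast; ring))
    (continuous_simpsonKernel.intervalIntegrable _ _)

theorem integral_simpsonKernel : ∫ t in a..(a + b) / 2, simpsonKernel a b t = 0 := by
  rw [integral_simpsonKernel_eq]; ring

theorem integral_abs_simpsonKernel :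
    ∫ t in a..(a + b) / 2, |simpsonKernel a b t| = (b - a) ^ 3 / 162 := by
  have hcont : Continuous fun t ↦ |simpsonKernel a b t| := continuous_simpsonKernel.abs
  have hpos : EqOn (fun t ↦ |simpsonKernel a b t|) (simpsonKernel a b)
      [[a, (2 * a + b) / 3]] := fun t ht ↦ by
    refine abs_of_nonneg ?_
    rcases mem_uIcc.mp ht with h | h <;> unfold simpsonKernel
    · nlinarith [mul_nonneg (sub_nonneg.2 h.1) (sub_nonneg.2 h.2)]
    · nlinarith [mul_nonneg (sub_nonneg.2 h.1) (sub_nonneg.2 h.2)]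
  have hneg : EqOn (fun t ↦ |simpsonKernel a b t|) (fun t ↦ -simpsonKernel a b t)
      [[(2 * a + b) / 3, (a + b) / 2]] := fun t ht ↦ by
    refine abs_of_nonpos ?_
    rcases mem_uIcc.mp ht with h | h <;> unfold simpsonKernel
    · nlinarith [mul_nonneg (sub_nonneg.2 h.1) (sub_nonneg.2 (h.1.trans h.2))]
    · nlinarith [mul_nonneg (sub_nonneg.2 h.2) (sub_nonneg.2 (h.1.trans h.2))]
  rw [← integral_add_adjacent_intervals (hcont.intervalIntegrable a ((2 * a + b) / 3))
    (hcont.intervalIntegrable _ _), integral_congr hpos, integral_congr hneg,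
    intervalIntegral.integral_neg, integral_simpsonKernel_eq, integral_simpsonKernel_eq]
  ring

end SimpsonKernel

/-- Simpson's error on `[a, b]` is `simpsonHalfError ψ ψ' a b - simpsonHalfError ψ ψ' b a`:
the `ψ'` terms, symmetric in `a` and `b`, cancel. -/
noncomputable def simpsonHalfError (ψ ψ' : ℝ → ℝ) (a b : ℝ) : ℝ :=
  (b - a) / 6 * ψ a + (b - a) / 3 * ψ ((a + b) / 2) - (b - a) ^ 2 / 24 * ψ' ((a + b) / 2) -
    ∫ t in a..(a + b) / 2, ψ t

section SimpsonHalfError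

variable {a b c K : ℝ} {s : Set ℝ} {ψ ψ' ψ'' : ℝ → ℝ}

theorem simpsonHalfError_sub_simpsonHalfError_swap (hψ : IntervalIntegrable ψ volume a b) :
    simpsonHalfError ψ ψ' a b - simpsonHalfError ψ ψ' b a =
      (b - a) / 6 * (ψ a + ψ b) + 2 * (b - a) / 3 * ψ ((a + b) / 2) - ∫ t in a..b, ψ t := by
  have hmid : (a + b) / 2 ∈ [[a, b]] := by
    rcases le_total a b with h | h
    · exact mem_uIcc.mpr (.inl ⟨by linarith, by linarith⟩)
    · exact mem_uIcc.mpr (.inr ⟨by linarith, by linarith⟩)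
  rw [← integral_add_adjacent_intervals (hψ.mono_set (uIcc_subset_uIcc left_mem_uIcc hmid))
    (hψ.mono_set (uIcc_subset_uIcc hmid right_mem_uIcc)), simpsonHalfError, simpsonHalfError,
    add_comm b a, integral_symm b]
  ring

theorem simpsonHalfError_eq_integral_simpsonKernel_mul (hs : [[a, (a + b) / 2]] ⊆ s)
    (hψ : ∀ x ∈ s, HasDerivWithinAt ψ (ψ' x) s x)
    (hψ' : ∀ x ∈ s, HasDerivWithinAt ψ' (ψ'' x) s x) (hψ'' : ContinuousOn ψ'' s) :
    simpsonHalfError ψ ψ' a b = ∫ t in a..(a + b) / 2, simpsonKernel a b t * ψ'' t := by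
  rw [integral_mul_deriv_deriv_eq (u' := fun t ↦ (b - a) / 6 - (t - a)) (u'' := fun _ ↦ -1)
    (fun t _ ↦ (hasDerivAt_simpsonKernel t).hasDerivWithinAt)
    (fun t _ ↦ ((hasDerivAt_id t).sub_const a).const_sub _ |>.hasDerivWithinAt.congr_deriv
      (by simp))
    (fun t ht ↦ (hψ t (hs ht)).mono hs) (fun t ht ↦ (hψ' t (hs ht)).mono hs)
    intervalIntegrable_const ((hψ''.mono hs).intervalIntegrable)]
  simp only [simpsonHalfError, simpsonKernel, neg_one_mul, intervalIntegral.integral_neg]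
  ring

theorem abs_simpsonHalfError_le (hs : [[a, (a + b) / 2]] ⊆ s)
    (hψ : ∀ x ∈ s, HasDerivWithinAt ψ (ψ' x) s x)
    (hψ' : ∀ x ∈ s, HasDerivWithinAt ψ' (ψ'' x) s x) (hψ'' : ContinuousOn ψ'' s)
    (hK : ∀ x ∈ s, |ψ'' x - c| ≤ K) :
    |simpsonHalfError ψ ψ' a b| ≤ K * |b - a| ^ 3 / 162 := by
  have hκ : Continuous (simpsonKernel a b) := continuous_simpsonKernel
  have hshift : ∫ t in a..(a + b) / 2, simpsonKernel a b t * ψ'' t =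
      ∫ t in a..(a + b) / 2, simpsonKernel a b t * (ψ'' t - c) := by
    simp_rw [mul_sub]
    rw [intervalIntegral.integral_sub, intervalIntegral.integral_mul_const,
      integral_simpsonKernel, zero_mul, sub_zero]
    · exact (hκ.intervalIntegrable _ _).mul_continuousOn (hψ''.mono hs)
    · exact (hκ.mul continuous_const).intervalIntegrable _ _
  rw [simpsonHalfError_eq_integral_simpsonKernel_mul hs hψ hψ' hψ'', hshift]
  calc _ ≤ K * |(∫ t in a..(a + b) / 2, |simpsonKernel a b t|)| :=
        abs_integral_mul_le_of_abs_le (hκ.intervalIntegrable _ _) fun x hx ↦ hK x (hs hx)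
    _ = K * |b - a| ^ 3 / 162 := by
        rw [integral_abs_simpsonKernel, abs_div, abs_pow]; norm_num; ring

end SimpsonHalfError

theorem simpson_stmt6 (a b m₂ M₂ : ℝ) (hab : a < b) (φ φ' φ'' : ℝ → ℝ)
    (hφ' : ∀ x ∈ Set.Icc a b, HasDerivWithinAt φ (φ' x) (Set.Icc a b) x)
    (hφ'' : ∀ x ∈ Set.Icc a b, HasDerivWithinAt φ' (φ'' x) (Set.Icc a b) x)
    (hcont : ContinuousOn φ'' (Set.Icc a b))
    (hm : ∀ x ∈ Set.Icc a b, m₂ ≤ φ'' x) (hM : ∀ x ∈ Set.Icc a b, φ'' x ≤ M₂) :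
    |(φ a + φ b) / 6 + 2 / 3 * φ ((a + b) / 2) - (1 / (b - a)) * ∫ t in a..b, φ t| ≤
      1 / 162 * (M₂ - m₂) * (b - a) ^ 2 := by
  have hba : 0 < b - a := sub_pos.mpr hab
  have hmid : (a + b) / 2 ∈ Icc a b := ⟨by linarith, by linarith⟩
  have hK : ∀ x ∈ Icc a b, |φ'' x - (m₂ + M₂) / 2| ≤ (M₂ - m₂) / 2 := fun x hx ↦
    abs_le.mpr ⟨by linarith [hm x hx], by linarith [hM x hx]⟩
  have hleft := abs_simpsonHalfError_le (uIcc_subset_Icc (left_mem_Icc.mpr hab.le) hmid)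
    hφ' hφ'' hcont hK
  have hright := abs_simpsonHalfError_le (b := a) (add_comm a b ▸
    uIcc_subset_Icc (right_mem_Icc.mpr hab.le) hmid) hφ' hφ'' hcont hK
  have hφ_int : IntervalIntegrable φ volume a b :=
    ContinuousOn.intervalIntegrable_of_Icc hab.le fun x hx ↦ (hφ' x hx).continuousWithinAt
  have hsplit : (φ a + φ b) / 6 + 2 / 3 * φ ((a + b) / 2) - (1 / (b - a)) * ∫ t in a..b, φ t =
      (simpsonHalfError φ φ' a b - simpsonHalfError φ φ' b a) / (b - a) := by
    rw [simpsonHalfError_sub_simpsonHalfError_swap hφ_int]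
    field_simp [hba.ne']
  rw [hsplit, abs_div, abs_of_pos hba, div_le_iff₀ hba]
  calc _ ≤ _ := abs_sub _ _
    _ ≤ _ := add_le_add hleft hright
    _ = _ := by rw [abs_sub_comm a b, abs_of_pos hba]; ring
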